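/- Let v ≥ 2 and m ≥ 2 be integers and γ ∈ ℤ. Define w_2 = (v−1)(γ+1) if v is odd, and w_2 = (v−1)(γ+1)(v−1−γ) if v is even. Suppose w_2 = s²·v_2 for some positive integer s and squarefree positive integer v_2, and suppose there is a prime p dividing v_2 that is self-conjugate modulo m. Then there exists no near conference matrix C_γ(v,m). -/

import Mathlib

/-!
Since `C Cᴴ = (v - 1 - γ) I + γ J`, the integer `n = |det C|² = (v-1-γ)^(v-1) (v-1)(γ+1)`
is `T² v₂` for some `T ≠ 0`, so `v_p(n)` is odd. On the other hand `α = det C` lies in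
`ℤ[ζ_m]`. As `p^k ≡ -1 (mod m)` for some `k`, complex conjugation acts on `ℤ[ζ_m]/(p)` as the
Frobenius power `x ↦ x^(p^k)`; so `p ∣ α ᾱ` gives `p ∣ α^(p^k+1)`, and since `ℤ[ζ_m]/(p)` is
reduced (`p ∤ m`), `p ∣ α`. Dividing out `p²` repeatedly shows that `v_p(α ᾱ)` is even.
The degenerate type `γ = v - 1` would force two rows of `C` to coincide.
-/

open Matrix

/-- `C` is a near conference matrix `C_γ(v, m)`: the diagonal entries vanish, all
off-diagonal entries are complex `m`-th roots of unity, and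
`C * Cᴴ = (v - 1 - γ) • I + γ • J`. -/
def IsNearConf (v m : ℕ) (γ : ℂ) (C : Matrix (Fin v) (Fin v) ℂ) : Prop :=
  (∀ i, C i i = 0) ∧ (∀ i j, i ≠ j → C i j ^ m = 1) ∧
    C * C.conjTranspose =
      ((v : ℂ) - 1 - γ) • (1 : Matrix (Fin v) (Fin v) ℂ) + γ • Matrix.of (fun _ _ => (1 : ℂ))

/-- A prime `p` coprime to `m` is self-conjugate modulo `m` if its multiplicative order
`f` modulo `m` is even and `p ^ (f / 2) ≡ -1 (mod m)`. -/
def SelfConjugate (p m : ℕ) : Prop :=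
  Nat.Coprime p m ∧ Even (orderOf (p : ZMod m)) ∧
    (p : ZMod m) ^ (orderOf (p : ZMod m) / 2) = -1

open Polynomial ComplexConjugate

theorem SelfConjugate.not_dvd {p m : ℕ} (hp : p.Prime) (h : SelfConjugate p m) : ¬p ∣ m :=
  (Nat.Prime.coprime_iff_not_dvd hp).mp h.1

theorem SelfConjugate.dvd_pow_add_one {p m : ℕ} (h : SelfConjugate p m) :
    m ∣ p ^ (orderOf (p : ZMod m) / 2) + 1 := by
  rw [← ZMod.natCast_eq_zero_iff]
  push_cast
  rw [h.2.2, neg_add_cancel]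

theorem ZMod.expand_prime_pow {p : ℕ} [Fact p.Prime] (k : ℕ) (f : (ZMod p)[X]) :
    expand (ZMod p) (p ^ k) f = f ^ p ^ k := by
  induction k with
  | zero => simp
  | succ k ih => rw [pow_succ, ← expand_expand, ZMod.expand_card, map_pow, ih, ← pow_mul]

theorem pow_sub_one_dvd_pow_add_mul_sub_pow {R : Type*} [CommRing R] (x : R) (a m d : ℕ) :
    x ^ m - 1 ∣ x ^ (a + m * d) - x ^ a := by
  have h := (sub_dvd_pow_sub_pow (x ^ m) 1 d).mul_left (x ^ a)
  rwa [one_pow, mul_sub, mul_one, ← pow_mul, ← pow_add] at h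

/-- Conjugation `X ↦ X ^ (m - 1)` agrees modulo `Φ_m` with the Frobenius power `X ↦ X ^ p ^ k`,
since `p ^ k ≡ m - 1 (mod m)`. -/
theorem cyclotomic_dvd_of_dvd_mul_comp {p m k : ℕ} [Fact p.Prime] (hpm : ¬p ∣ m)
    (hmk : m ∣ p ^ k + 1) {P : (ZMod p)[X]}
    (h : cyclotomic m (ZMod p) ∣ P * P.comp (X ^ (m - 1))) : cyclotomic m (ZMod p) ∣ P := by
  obtain ⟨c, hc⟩ := hmk
  have hm : m ≠ 0 := by rintro rfl; simp at hc
  obtain ⟨d, rfl⟩ : ∃ d, c = d + 1 :=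
    Nat.exists_eq_add_one.mpr (Nat.pos_of_ne_zero (by rintro rfl; simp at hc))
  have hq : p ^ k = (m - 1) + m * d := by rw [mul_add_one] at hc; omega
  have hfrob : P.comp (X ^ p ^ k) = P ^ p ^ k := by
    rw [← expand_eq_comp_X_pow, ZMod.expand_prime_pow]
  have hsub : cyclotomic m (ZMod p) ∣ P ^ p ^ k - P.comp (X ^ (m - 1)) := by
    rw [← hfrob]
    refine (cyclotomic.dvd_X_pow_sub_one m _).trans
      ((pow_sub_one_dvd_pow_add_mul_sub_pow X (m - 1) m d).trans ?_)
    rw [← hq]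
    have h := sub_dvd_eval_sub (X ^ p ^ k) (X ^ (m - 1)) (P.map C)
    rwa [eval_map, eval_map] at h
  have hpow : cyclotomic m (ZMod p) ∣ P ^ (p ^ k + 1) := by
    rw [show P ^ (p ^ k + 1) = P * P.comp (X ^ (m - 1)) + P * (P ^ p ^ k - P.comp (X ^ (m - 1)))
      by ring]
    exact dvd_add h (hsub.mul_left P)
  have : NeZero (m : ZMod p) := ⟨fun h0 => hpm ((ZMod.natCast_eq_zero_iff _ _).mp h0)⟩
  exact ((squarefree_cyclotomic m _).dvd_pow_iff_dvd (Nat.succ_ne_zero _)).mp hpow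

theorem Polynomial.C_dvd_of_map_intCast_eq_zero {p : ℕ} {P : ℤ[X]}
    (h : P.map (Int.castRingHom (ZMod p)) = 0) : C (p : ℤ) ∣ P := by
  refine (C_dvd_iff_dvd_coeff _ _).mpr fun i => ?_
  have hi := congrArg (coeff · i) h
  simpa [ZMod.intCast_zmod_eq_zero_iff_dvd] using hi

theorem IsPrimitiveRoot.exists_aeval_eq_mul_of_cyclotomic_dvd {p m : ℕ} {ζ : ℂ}
    (hζ : IsPrimitiveRoot ζ m) (hm : 0 < m) {P : ℤ[X]}
    (h : cyclotomic m (ZMod p) ∣ P.map (Int.castRingHom (ZMod p))) :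
    ∃ S : ℤ[X], aeval ζ P = p * aeval ζ S := by
  obtain ⟨T, hT⟩ := h
  obtain ⟨T, rfl⟩ := map_surjective (Int.castRingHom (ZMod p)) ZMod.intCast_surjective T
  obtain ⟨S, hS⟩ := C_dvd_of_map_intCast_eq_zero (p := p) (P := P - cyclotomic m ℤ * T)
    (by rw [Polynomial.map_sub, Polynomial.map_mul, map_cyclotomic, hT, sub_self])
  have hΦ : aeval ζ (cyclotomic m ℤ) = 0 := cyclotomic_eq_minpoly hζ hm ▸ minpoly.aeval ℤ ζ
  refine ⟨S, ?_⟩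
  have := congrArg (aeval ζ) hS
  simpa [hΦ, sub_eq_zero] using this

theorem Complex.conj_aeval_of_pow_eq_one {ζ : ℂ} {m : ℕ} (h : ζ ^ m = 1) (hm : m ≠ 0)
    (P : ℤ[X]) : conj (aeval ζ P) = aeval ζ (P.comp (X ^ (m - 1))) := by
  have hζ0 : ζ ≠ 0 := by rintro rfl; simp [zero_pow hm] at h
  have hconj : conj ζ = ζ ^ (m - 1) := by
    rw [← Complex.inv_eq_conj (Complex.norm_eq_one_of_pow_eq_one h hm),
      pow_sub₀ ζ hζ0 (Nat.one_le_iff_ne_zero.mpr hm), h, pow_one, one_mul]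
  rw [aeval_comp, aeval_X_pow, ← hconj]
  exact (aeval_algHom_apply (starRingEnd ℂ).toIntAlgHom ζ P).symm

theorem IsIntegral.exists_int_eq_of_mul_eq {K : Type*} [Field K] [CharZero K] {x : K}
    (hx : IsIntegral ℤ x) {d n : ℤ} (hd : d ≠ 0) (h : d * x = n) : ∃ z : ℤ, x = z := by
  have hxq : x = algebraMap ℚ K (n / d) := by
    rw [map_div₀, map_intCast, map_intCast, ← h]
    field_simp
  rw [hxq] at hx
  obtain ⟨z, hz⟩ := IsIntegrallyClosed.isIntegral_iff.mp
    ((isIntegral_algebraMap_iff (algebraMap ℚ K).injective).mp hx)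
  exact ⟨z, by rw [hxq, ← hz]; simp⟩

theorem IsPrimitiveRoot.exists_aeval_eq_prime_mul {p m : ℕ} [Fact p.Prime]
    (hsc : SelfConjugate p m) {ζ : ℂ} (hζ : IsPrimitiveRoot ζ m) (hm : 0 < m) {P : ℤ[X]}
    {n : ℤ} (hpn : (p : ℤ) ∣ n) (h : aeval ζ P * conj (aeval ζ P) = n) :
    ∃ S : ℤ[X], aeval ζ P = p * aeval ζ S := by
  refine hζ.exists_aeval_eq_mul_of_cyclotomic_dvd hm
    (cyclotomic_dvd_of_dvd_mul_comp (hsc.not_dvd Fact.out) hsc.dvd_pow_add_one ?_)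
  have hdvd : cyclotomic m ℤ ∣ P * P.comp (X ^ (m - 1)) - C n := by
    rw [cyclotomic_eq_minpoly hζ hm]
    refine minpoly.isIntegrallyClosed_dvd (hζ.isIntegral hm) ?_
    rw [map_sub, map_mul, ← Complex.conj_aeval_of_pow_eq_one hζ.pow_eq_one hm.ne', h, aeval_C,
      algebraMap_int_eq, eq_intCast, sub_self]
  have hn : (n : ZMod p) = 0 := (ZMod.intCast_zmod_eq_zero_iff_dvd n p).mpr hpn
  have h := Polynomial.map_dvd (Int.castRingHom (ZMod p)) hdvd
  rwa [Polynomial.map_sub, Polynomial.map_mul, map_comp, Polynomial.map_pow, map_X, map_C,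
    eq_intCast, hn, C_0, sub_zero, map_cyclotomic] at h

theorem isIntegral_aeval_mul_conj {ζ : ℂ} (hζ : IsIntegral ℤ ζ) (S : ℤ[X]) :
    IsIntegral ℤ (aeval ζ S * conj (aeval ζ S)) := by
  have hS : IsIntegral ℤ (aeval ζ S) := by
    refine adjoin_le_integralClosure hζ ?_
    rw [Algebra.adjoin_singleton_eq_range_aeval]
    exact ⟨S, rfl⟩
  exact hS.mul (hS.map (starRingEnd ℂ).toIntAlgHom)

theorem IsPrimitiveRoot.even_padicValInt_of_aeval_mul_conj_eq {p m : ℕ} [Fact p.Prime]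
    (hsc : SelfConjugate p m) {ζ : ℂ} (hζ : IsPrimitiveRoot ζ m) (hm : 0 < m) (P : ℤ[X])
    {n : ℤ} (hn : n ≠ 0) (h : aeval ζ P * conj (aeval ζ P) = n) : Even (padicValInt p n) := by
  induction hk : padicValInt p n using Nat.strong_induction_on generalizing P n with
  | _ k ih =>
  by_cases hpn : (p : ℤ) ∣ n
  · obtain ⟨S, hS⟩ := hζ.exists_aeval_eq_prime_mul hsc hm hpn h
    have hp0 : (p : ℤ) ^ 2 ≠ 0 := pow_ne_zero _ (Nat.cast_ne_zero.mpr (Fact.out : p.Prime).ne_zero)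
    have hpS : (((p : ℤ) ^ 2 : ℤ) : ℂ) * (aeval ζ S * conj (aeval ζ S)) = n := by
      rw [← h, hS, map_mul, map_natCast]
      push_cast
      ring
    obtain ⟨z, hz⟩ :=
      (isIntegral_aeval_mul_conj (hζ.isIntegral hm) S).exists_int_eq_of_mul_eq hp0 hpS
    have hnz : n = (p : ℤ) ^ 2 * z := by
      rw [hz] at hpS
      exact_mod_cast hpS.symm
    have hz0 : z ≠ 0 := by
      rintro rfl
      exact hn (by simpa using hnz)
    have hval : padicValInt p n = padicValInt p z + 2 := by
      rw [hnz, padicValInt.mul hp0 hz0, add_comm]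
      norm_cast
      rw [padicValInt.of_nat, padicValNat.prime_pow]
    rw [← hk, hval] at ih ⊢
    exact (ih _ (by omega) S hz0 hz rfl).add even_two
  · rw [← hk, padicValInt.eq_zero_of_not_dvd hpn]
    exact Even.zero

theorem Matrix.det_smul_one_add_smul_ones {K ι : Type*} [Field K] [Fintype ι]
    [DecidableEq ι] [Nonempty ι] {a : K} (ha : a ≠ 0) (b : K) :
    (a • (1 : Matrix ι ι K) + b • Matrix.of fun _ _ => (1 : K)).det =
      a ^ (Fintype.card ι - 1) * (a + Fintype.card ι * b) := by
  have hrank_one : a • (1 : Matrix ι ι K) + b • Matrix.of (fun _ _ => (1 : K)) =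
      a • (1 + replicateCol Unit (fun _ : ι => b / a) *
        replicateRow Unit (fun _ : ι => (1 : K))) := by
    ext i j
    simp [mul_apply]
    field_simp
  have hcard : a ^ Fintype.card ι = a ^ (Fintype.card ι - 1) * a := by
    rw [← pow_succ, Nat.sub_add_cancel Fintype.card_pos]
  rw [hrank_one, det_smul, det_one_add_replicateCol_mul_replicateRow, hcard]
  simp only [dotProduct, one_mul, Finset.sum_const, Finset.card_univ, nsmul_eq_mul]
  field_simp

theorem Matrix.sum_normSq_sub_row {ι : Type*} [Fintype ι] (C : Matrix ι ι ℂ) (i j : ι) :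
    ((∑ k, Complex.normSq (C i k - C j k) : ℝ) : ℂ) =
      (C * Cᴴ) i i - (C * Cᴴ) i j - (C * Cᴴ) j i + (C * Cᴴ) j j := by
  simp only [mul_apply, conjTranspose_apply, Complex.ofReal_sum, ← Finset.sum_sub_distrib,
    ← Finset.sum_add_distrib, Complex.normSq_eq_conj_mul_self, RCLike.star_def, map_sub]
  exact Finset.sum_congr rfl fun k _ => by ring

theorem IsNearConf.sub_ne_zero {v m : ℕ} {γ : ℂ} {C : Matrix (Fin v) (Fin v) ℂ}
    (hC : IsNearConf v m γ C) (hv : 2 ≤ v) (hm : m ≠ 0) : (v : ℂ) - 1 - γ ≠ 0 := by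
  obtain ⟨hdiag, hroot, hgram⟩ := hC
  let i : Fin v := ⟨0, by omega⟩
  let j : Fin v := ⟨1, by omega⟩
  have hij : i ≠ j := by simp [i, j, Fin.ext_iff]
  intro ha
  have hsum : ∑ k, Complex.normSq (C i k - C j k) = 0 := by
    have h := C.sum_normSq_sub_row i j
    simp only [hgram, Matrix.add_apply, Matrix.smul_apply, one_apply_eq, one_apply_ne hij,
      one_apply_ne hij.symm, of_apply, smul_eq_mul, ha] at h
    exact_mod_cast (h.trans (by ring) : _ = (0 : ℂ))
  have hCij : C i j = 0 := by
    have h := (Finset.sum_eq_zero_iff_of_nonneg fun k _ => Complex.normSq_nonneg _).mp hsum j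
      (Finset.mem_univ j)
    rwa [Complex.normSq_eq_zero, hdiag, sub_zero] at h
  simpa [hCij, zero_pow hm] using hroot i j hij

theorem IsNearConf.exists_aeval_eq_det {v m : ℕ} {γ : ℂ} {C : Matrix (Fin v) (Fin v) ℂ}
    (hC : IsNearConf v m γ C) [NeZero m] {ζ : ℂ} (hζ : IsPrimitiveRoot ζ m) :
    ∃ P : ℤ[X], aeval ζ P = C.det := by
  have hentry : ∀ i j, ∃ P : ℤ[X], aeval ζ P = C i j := by
    intro i j
    by_cases hij : i = j
    · exact ⟨0, by rw [hij, hC.1, map_zero]⟩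
    · obtain ⟨k, -, hk⟩ := hζ.eq_pow_of_pow_eq_one (hC.2.1 i j hij)
      exact ⟨X ^ k, by rw [aeval_X_pow, hk]⟩
  choose M hM using hentry
  refine ⟨(Matrix.of M).det, ?_⟩
  rw [AlgHom.map_det]
  congr 1
  ext i j
  exact hM i j

theorem IsNearConf.det_mul_conj {v m : ℕ} {γ : ℂ} {C : Matrix (Fin v) (Fin v) ℂ}
    (hC : IsNearConf v m γ C) (hv : 0 < v) (ha : (v : ℂ) - 1 - γ ≠ 0) :
    C.det * conj C.det = ((v : ℂ) - 1 - γ) ^ (v - 1) * (((v : ℂ) - 1) * (γ + 1)) := by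
  have : NeZero v := ⟨hv.ne'⟩
  have hconj : conj C.det = Cᴴ.det := (det_conjTranspose C).symm
  rw [hconj, ← det_mul, hC.2.2, det_smul_one_add_smul_ones ha, Fintype.card_fin]
  ring

theorem exists_pow_pred_mul_eq_sq_mul {R : Type*} [CommRing R] (a x : R) {v : ℕ} (hv : 0 < v) :
    ∃ k, a ^ (v - 1) * x = (a ^ k) ^ 2 * (if Odd v then x else x * a) := by
  rcases Nat.even_or_odd' v with ⟨k, rfl | rfl⟩
  · refine ⟨k - 1, ?_⟩
    rw [if_neg (Nat.not_odd_iff_even.mpr (even_two_mul k)), ← pow_mul,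
      show 2 * k - 1 = (k - 1) * 2 + 1 by omega, pow_succ]
    ring
  · refine ⟨k, ?_⟩
    rw [if_pos (odd_two_mul_add_one k), ← pow_mul, Nat.add_sub_cancel, mul_comm k]

theorem odd_padicValInt_sq_mul {p d : ℕ} [Fact p.Prime] {T : ℤ} (hT : T ≠ 0)
    (hd : Squarefree d) (hpd : p ∣ d) : Odd (padicValInt p (T ^ 2 * d)) := by
  have hd0 : (d : ℤ) ≠ 0 := Nat.cast_ne_zero.mpr hd.ne_zero
  rw [padicValInt.mul (pow_ne_zero 2 hT) hd0, sq, padicValInt.mul hT hT, padicValInt.of_nat,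
    ← Nat.factorization_def d Fact.out, Nat.factorization_eq_one_of_squarefree hd Fact.out hpd]
  exact ⟨padicValInt p T, by ring⟩

/-- Brock's criterion for near conference matrices: with
`w₂ = (v-1)(γ+1)` for odd `v` and `w₂ = (v-1)(γ+1)(v-1-γ)` for even `v`, if the
squarefree part `v₂` of `w₂` has a prime divisor that is self-conjugate modulo `m`,
then no `C_γ(v, m)` exists. -/
theorem stmt_7 (v m : ℕ) (hv : 2 ≤ v) (hm : 2 ≤ m) (γ : ℤ) (w2 : ℤ)
    (hw2 : w2 = if Odd v then ((v : ℤ) - 1) * (γ + 1)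
      else ((v : ℤ) - 1) * (γ + 1) * ((v : ℤ) - 1 - γ))
    (s v2 : ℕ) (hs : 0 < s) (hv2 : 0 < v2) (hsf : Squarefree v2)
    (hfac : w2 = (s : ℤ) ^ 2 * v2)
    (p : ℕ) (hp : p.Prime) (hpv2 : p ∣ v2) (hsc : SelfConjugate p m) :
    ¬∃ C : Matrix (Fin v) (Fin v) ℂ, IsNearConf v m (γ : ℂ) C := by
  rintro ⟨C, hC⟩
  have : Fact p.Prime := ⟨hp⟩
  have : NeZero m := ⟨by omega⟩
  obtain ⟨ζ, hζ⟩ : ∃ ζ : ℂ, IsPrimitiveRoot ζ m :=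
    ⟨_, Complex.isPrimitiveRoot_exp m (NeZero.ne m)⟩
  have ha : (v : ℂ) - 1 - γ ≠ 0 := hC.sub_ne_zero hv (NeZero.ne m)
  set a : ℤ := (v : ℤ) - 1 - γ
  have ha' : a ≠ 0 := fun h => ha (by exact_mod_cast h)
  obtain ⟨k, hk⟩ := exists_pow_pred_mul_eq_sq_mul a (((v : ℤ) - 1) * (γ + 1)) (by omega : 0 < v)
  have hn : a ^ (v - 1) * (((v : ℤ) - 1) * (γ + 1)) = (a ^ k * s) ^ 2 * v2 := by
    rw [hk, ← hw2, hfac]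
    ring
  have hT : a ^ k * s ≠ 0 := by positivity
  obtain ⟨P, hP⟩ := hC.exists_aeval_eq_det hζ
  have hdet : aeval ζ P * conj (aeval ζ P) = (((a ^ k * s) ^ 2 * v2 : ℤ) : ℂ) := by
    rw [hP, hC.det_mul_conj (by omega) ha, ← hn]
    push_cast [a]
    ring
  have heven := hζ.even_padicValInt_of_aeval_mul_conj_eq hsc (by omega) P
    (mul_ne_zero (pow_ne_zero 2 hT) (by exact_mod_cast hv2.ne')) hdet
  exact Nat.not_even_iff_odd.mpr (odd_padicValInt_sq_mul hT hsf hpv2) heven
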